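/- arXiv:1403.6602 — 3 statements merged into one kernel-verified Lean document; each statement's English description precedes it below -/
import Mathlib

section
/- Let t = (t₁,t₂,t₃) ∈ ℕ³, k = t₁+t₂+t₃+2, and let w ≥ k be an integer. Let (C_n)_{n∈ℕ} be a sequence of real numbers such that C_n takes arbitrary fixed values for n ≤ w and, for all n > w, C_n = T_n + Σ_{j=0}^{n−2} w_{n,j}·C_j, where the toll sequence satisfies T_n = a·n + O(1) for a constant a > 0. Then C_n / (n·ln n) → a / H(t) as n → ∞, where H(t) is the discrete entropy of t. -/
open Finset Filter Real Asymptotics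

/-- The `n`-th harmonic number `H_n = ∑_{i=1}^n 1/i`. -/
noncomputable def harm (n : ℕ) : ℝ := ∑ i ∈ Finset.range n, (1 : ℝ) / (i + 1)

/-- The discrete entropy `H(t)` of `t = (t₁,t₂,t₃)` with `k = t₁+t₂+t₃+2`. -/
noncomputable def Hdisc (t1 t2 t3 : ℕ) : ℝ :=
  ((t1 : ℝ) + 1) / ((t1 : ℝ) + t2 + t3 + 3) * (harm (t1 + t2 + t3 + 3) - harm (t1 + 1))
  + ((t2 : ℝ) + 1) / ((t1 : ℝ) + t2 + t3 + 3) * (harm (t1 + t2 + t3 + 3) - harm (t2 + 1))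
  + ((t3 : ℝ) + 1) / ((t1 : ℝ) + t2 + t3 + 3) * (harm (t1 + t2 + t3 + 3) - harm (t3 + 1))

/-- Rising factorial `a^{(m)} = a (a+1) ⋯ (a+m−1)`. -/
def ascNat (a m : ℕ) : ℕ := ∏ i ∈ Finset.range m, (a + i)

/-- `π_l(N, i) = binom(N,i) (t+1)^{(i)} (k−t)^{(N−i)} / (k+1)^{(N)}` for `0 ≤ i ≤ N`, else `0`. -/
noncomputable def piw (t k N : ℕ) (i : ℤ) : ℝ :=
  if 0 ≤ i ∧ i ≤ (N : ℤ) then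
    (N.choose i.toNat : ℝ) * (ascNat (t + 1) i.toNat : ℝ)
      * (ascNat (k - t) (N - i.toNat) : ℝ) / (ascNat (k + 1) N : ℝ)
  else 0

/-- The recurrence weights `w_{n,j} = ∑_{l=1}^3 π_l(n−k, j−t_l)`. -/
noncomputable def wgt (t1 t2 t3 n j : ℕ) : ℝ :=
  piw t1 (t1 + t2 + t3 + 2) (n - (t1 + t2 + t3 + 2)) ((j : ℤ) - t1)
  + piw t2 (t1 + t2 + t3 + 2) (n - (t1 + t2 + t3 + 2)) ((j : ℤ) - t2)
  + piw t3 (t1 + t2 + t3 + 2) (n - (t1 + t2 + t3 + 2)) ((j : ℤ) - t3)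

open scoped Topology

/-!
The weight `w_{n,·}` is a sum of three shifted Pólya-urn (beta-binomial) laws. Their Pascal-type
recurrence in `n` gives closed forms for `∑_j w_{n,j} φ(j)` when `φ(j)` is `1`, `j + 1` or
`(j + 1) H_{j+1}`; consequently `U_n = α (n+1) H_{n+1} + β (n+1) + γ` satisfies
`U_n = ∑_j w_{n,j} U_j + α H(t) (n+1) - 2γ`. With `α = a / H(t) ± δ`, a suitable `γ` and `β` large
enough for the initial values, `U` is a super- resp. subsolution of the recurrence, so by the
maximum principle it bounds `C` from above resp. below; and `U_n / (n ln n) → α`.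
-/

lemma harm_succ (n : ℕ) : harm (n + 1) = harm n + 1 / ((n : ℝ) + 1) := by
  simp [harm, sum_range_succ]

lemma harm_strictMono : StrictMono harm :=
  strictMono_nat_of_lt_succ fun n => by rw [harm_succ]; exact lt_add_of_pos_right _ (by positivity)

lemma harm_eq_harmonic (n : ℕ) : harm n = harmonic n := by
  simp [harm, harmonic]

lemma ascNat_succ (a m : ℕ) : ascNat a (m + 1) = ascNat a m * (a + m) :=
  prod_range_succ _ _

lemma ascNat_pos {a : ℕ} (ha : 0 < a) (m : ℕ) : 0 < ascNat a m :=
  prod_pos fun i _ => by omega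

lemma piw_of_neg (t k N : ℕ) {i : ℤ} (hi : i < 0) : piw t k N i = 0 :=
  if_neg fun h => by omega

lemma piw_of_gt (t k N : ℕ) {i : ℤ} (hi : (N : ℤ) < i) : piw t k N i = 0 :=
  if_neg fun h => by omega

lemma piw_nonneg (t k N : ℕ) (i : ℤ) : 0 ≤ piw t k N i := by
  unfold piw; split_ifs <;> positivity

/-- Vanishes for `i > N` through the binomial coefficient, so `piw_natCast` needs no case split. -/
def urnNumerator (t k N i : ℕ) : ℕ :=
  N.choose i * ascNat (t + 1) i * ascNat (k - t) (N - i)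

lemma piw_natCast (t k N m : ℕ) :
    piw t k N m = urnNumerator t k N m / ascNat (k + 1) N := by
  rcases le_or_gt m N with h | h
  · rw [piw, if_pos ⟨m.cast_nonneg, by exact_mod_cast h⟩, Int.toNat_natCast, urnNumerator]
    push_cast
    rfl
  · rw [piw_of_gt t k N (by exact_mod_cast h), urnNumerator, Nat.choose_eq_zero_of_lt h]
    simp

lemma piw_zero (t k : ℕ) (i : ℤ) : piw t k 0 i = if i = 0 then 1 else 0 := by
  split_ifs with h
  · subst h; simp [piw, ascNat]
  · rcases lt_or_gt_of_ne h with h | h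
    · exact piw_of_neg t k 0 h
    · exact piw_of_gt t k 0 h

section Urn

variable {t k : ℕ}

lemma urnNumerator_succ_zero (htk : t ≤ k) (N : ℕ) :
    (urnNumerator t k (N + 1) 0 : ℝ) = ((k : ℝ) - t + N) * urnNumerator t k N 0 := by
  simp only [urnNumerator, Nat.choose_zero_right, Nat.sub_zero, ascNat_succ]
  push_cast [Nat.cast_sub htk]
  ring

lemma urnNumerator_succ_succ (htk : t ≤ k) (N m : ℕ) :
    (urnNumerator t k (N + 1) (m + 1) : ℝ)
      = ((k : ℝ) - t + N - (m + 1)) * urnNumerator t k N (m + 1)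
        + ((t : ℝ) + m + 1) * urnNumerator t k N m := by
  rcases lt_trichotomy m N with hm | rfl | hm
  · obtain ⟨j, rfl⟩ : ∃ j, N = m + 1 + j := ⟨N - (m + 1), by omega⟩
    simp only [urnNumerator, show m + 1 + j + 1 - (m + 1) = j + 1 by omega,
      show m + 1 + j - (m + 1) = j by omega, show m + 1 + j - m = j + 1 by omega,
      Nat.choose_succ_succ, ascNat_succ]
    push_cast [Nat.cast_sub htk]
    ring
  · simp only [urnNumerator, Nat.choose_self, Nat.choose_succ_self, Nat.sub_self, ascNat_succ]
    push_cast
    ring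
  · simp [urnNumerator, Nat.choose_eq_zero_of_lt hm,
      Nat.choose_eq_zero_of_lt (by omega : N < m + 1),
      Nat.choose_eq_zero_of_lt (by omega : N + 1 < m + 1)]

/-- `piw t k N` is the law of the number of draws of one colour in `N` draws from a Pólya urn
starting with `t + 1` of `k + 1` balls of that colour; conditioning on the last draw gives this. -/
lemma piw_succ (htk : t ≤ k) (N : ℕ) (i : ℤ) :
    ((k : ℝ) + N + 1) * piw t k (N + 1) i
      = ((k : ℝ) - t + N - i) * piw t k N i + ((t : ℝ) + i) * piw t k N (i - 1) := by
  rcases lt_or_ge i 0 with hi | hi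
  · simp [piw_of_neg _ _ _ hi, piw_of_neg _ _ _ (by omega : i - 1 < 0)]
  have hD : (0 : ℝ) < ascNat (k + 1) N := by exact_mod_cast ascNat_pos k.succ_pos N
  have hDsucc : (ascNat (k + 1) (N + 1) : ℝ) = ascNat (k + 1) N * ((k : ℝ) + N + 1) := by
    rw [ascNat_succ]; push_cast; ring
  lift i to ℕ using hi
  cases i with
  | zero =>
    rw [Nat.cast_zero, piw_of_neg t k N (by norm_num : (0 : ℤ) - 1 < 0), ← Nat.cast_zero,
      piw_natCast, piw_natCast, hDsucc, urnNumerator_succ_zero htk]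
    field_simp
    push_cast
    ring
  | succ m =>
    rw [show ((m + 1 : ℕ) : ℤ) - 1 = m by push_cast; ring, piw_natCast, piw_natCast,
      piw_natCast, hDsucc, urnNumerator_succ_succ htk]
    field_simp
    push_cast
    ring

lemma sum_piw_succ_mul (htk : t ≤ k) (N : ℕ) (φ : ℕ → ℝ) :
    ((k : ℝ) + N + 1) * ∑ i ∈ range (N + 1 + 1), piw t k (N + 1) i * φ i
      = ∑ i ∈ range (N + 1),
          piw t k N i * (((k : ℝ) - t + N - i) * φ i + ((t : ℝ) + i + 1) * φ (i + 1)) := by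
  have hurn (i : ℕ) : ((k : ℝ) + N + 1) * (piw t k (N + 1) i * φ i)
      = ((k : ℝ) - t + N - i) * piw t k N i * φ i
        + ((t : ℝ) + i) * piw t k N ((i : ℤ) - 1) * φ i := by
    rw [← mul_assoc, piw_succ htk]; push_cast; ring
  rw [mul_sum, sum_congr rfl fun i _ => hurn i, sum_add_distrib, sum_range_succ,
    sum_range_succ' _ (N + 1), piw_of_gt t k N (by push_cast; omega),
    piw_of_neg t k N (by norm_num)]
  simp only [mul_zero, zero_mul, add_zero, ← sum_add_distrib]
  refine sum_congr rfl fun i _ => ?_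
  push_cast [add_sub_cancel_right]
  ring

theorem sum_piw (htk : t ≤ k) (N : ℕ) : ∑ i ∈ range (N + 1), piw t k N i = 1 := by
  induction N with
  | zero => simp [piw_zero]
  | succ N ih =>
    have hterm (i : ℕ) : piw t k N i * (((k : ℝ) - t + N - i) * 1 + ((t : ℝ) + i + 1) * 1)
        = ((k : ℝ) + N + 1) * piw t k N i := by ring
    have h := sum_piw_succ_mul htk N fun _ => 1
    rw [sum_congr rfl fun i _ => hterm i, ← mul_sum, ih] at h
    simpa [(by positivity : (k : ℝ) + N + 1 ≠ 0)] using h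

theorem sum_piw_mul_succ (htk : t ≤ k) (N : ℕ) :
    ∑ i ∈ range (N + 1), piw t k N i * (((t + i : ℕ) : ℝ) + 1)
      = ((t : ℝ) + 1) / (k + 1) * ((k : ℝ) + N + 1) := by
  induction N with
  | zero => simp [piw_zero]; field_simp
  | succ N ih =>
    have hterm (i : ℕ) : piw t k N i * (((k : ℝ) - t + N - i) * (((t + i : ℕ) : ℝ) + 1)
          + ((t : ℝ) + i + 1) * (((t + (i + 1) : ℕ) : ℝ) + 1))
        = ((k : ℝ) + N + 2) * (piw t k N i * (((t + i : ℕ) : ℝ) + 1)) := by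
      push_cast; ring
    have h := sum_piw_succ_mul htk N fun i => ((t + i : ℕ) : ℝ) + 1
    rw [sum_congr rfl fun i _ => hterm i, ← mul_sum, ih] at h
    apply mul_left_cancel₀ (by positivity : (k : ℝ) + N + 1 ≠ 0)
    rw [h]
    push_cast
    field_simp
    ring

theorem sum_piw_mul_harm (htk : t ≤ k) (N : ℕ) :
    ∑ i ∈ range (N + 1), piw t k N i * ((((t + i : ℕ) : ℝ) + 1) * harm (t + i + 1))
      = ((t : ℝ) + 1) / (k + 1) * ((k : ℝ) + N + 1)
          * (harm (k + N + 1) - harm (k + 1) + harm (t + 1)) := by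
  induction N with
  | zero => simp [piw_zero]; field_simp; simp
  | succ N ih =>
    have hterm (i : ℕ) : piw t k N i * (((k : ℝ) - t + N - i)
            * ((((t + i : ℕ) : ℝ) + 1) * harm (t + i + 1))
          + ((t : ℝ) + i + 1) * ((((t + (i + 1) : ℕ) : ℝ) + 1) * harm (t + (i + 1) + 1)))
        = ((k : ℝ) + N + 2) * (piw t k N i * ((((t + i : ℕ) : ℝ) + 1) * harm (t + i + 1)))
          + piw t k N i * (((t + i : ℕ) : ℝ) + 1) := by
      rw [← add_assoc, harm_succ (t + i + 1)]
      push_cast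
      field_simp
      ring
    have h := sum_piw_succ_mul htk N fun i => (((t + i : ℕ) : ℝ) + 1) * harm (t + i + 1)
    rw [sum_congr rfl fun i _ => hterm i, sum_add_distrib, ← mul_sum, ih,
      sum_piw_mul_succ htk] at h
    apply mul_left_cancel₀ (by positivity : (k : ℝ) + N + 1 ≠ 0)
    rw [h, show k + (N + 1) + 1 = k + N + 1 + 1 by ring, harm_succ (k + N + 1)]
    push_cast
    field_simp
    ring

end Urn

lemma sum_range_piw_sub_mul (t k N M : ℕ) (hM : t + N < M) (φ : ℕ → ℝ) :
    ∑ j ∈ range M, piw t k N ((j : ℤ) - t) * φ j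
      = ∑ i ∈ range (N + 1), piw t k N i * φ (t + i) := by
  obtain ⟨r, rfl⟩ : ∃ r, M = t + (N + 1) + r := ⟨M - (t + N + 1), by omega⟩
  rw [sum_range_add, sum_range_add, sum_eq_zero fun j hj => ?_,
    sum_eq_zero (s := range r) fun j _ => ?_]
  · simp
  · rw [piw_of_gt t k N (by push_cast; omega), zero_mul]
  · rw [piw_of_neg t k N (by simp at hj; omega), zero_mul]

lemma sum_wgt_mul (t1 t2 t3 N : ℕ) (φ : ℕ → ℝ) :
    ∑ j ∈ range (t1 + t2 + t3 + 2 + N - 1), wgt t1 t2 t3 (t1 + t2 + t3 + 2 + N) j * φ j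
      = ∑ i ∈ range (N + 1), piw t1 (t1 + t2 + t3 + 2) N i * φ (t1 + i)
        + ∑ i ∈ range (N + 1), piw t2 (t1 + t2 + t3 + 2) N i * φ (t2 + i)
        + ∑ i ∈ range (N + 1), piw t3 (t1 + t2 + t3 + 2) N i * φ (t3 + i) := by
  simp only [wgt, Nat.add_sub_cancel_left, add_mul, sum_add_distrib]
  rw [sum_range_piw_sub_mul _ _ _ _ (by omega), sum_range_piw_sub_mul _ _ _ _ (by omega),
    sum_range_piw_sub_mul _ _ _ _ (by omega)]

lemma wgt_nonneg (t1 t2 t3 n j : ℕ) : 0 ≤ wgt t1 t2 t3 n j :=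
  add_nonneg (add_nonneg (piw_nonneg _ _ _ _) (piw_nonneg _ _ _ _)) (piw_nonneg _ _ _ _)

noncomputable def harmAffine (α β γ : ℝ) (n : ℕ) : ℝ :=
  α * (((n : ℝ) + 1) * harm (n + 1)) + β * ((n : ℝ) + 1) + γ

lemma sum_piw_mul_harmAffine {t k : ℕ} (htk : t ≤ k) (N : ℕ) (α β γ : ℝ) :
    ∑ i ∈ range (N + 1), piw t k N i * harmAffine α β γ (t + i)
      = ((t : ℝ) + 1) / (k + 1) * ((k : ℝ) + N + 1)
          * (α * (harm (k + N + 1) - harm (k + 1) + harm (t + 1)) + β) + γ := by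
  have hsplit (i : ℕ) : piw t k N i * harmAffine α β γ (t + i)
      = α * (piw t k N i * ((((t + i : ℕ) : ℝ) + 1) * harm (t + i + 1)))
        + β * (piw t k N i * (((t + i : ℕ) : ℝ) + 1)) + γ * piw t k N i := by
    rw [harmAffine]; ring
  rw [sum_congr rfl fun i _ => hsplit i, sum_add_distrib, sum_add_distrib, ← mul_sum, ← mul_sum,
    ← mul_sum, sum_piw_mul_harm htk, sum_piw_mul_succ htk, sum_piw htk]
  ring

theorem sum_wgt_mul_harmAffine (t1 t2 t3 : ℕ) {n : ℕ} (hn : t1 + t2 + t3 + 2 ≤ n) (α β γ : ℝ) :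
    ∑ j ∈ range (n - 1), wgt t1 t2 t3 n j * harmAffine α β γ j
      = harmAffine α β γ n - (α * Hdisc t1 t2 t3 * ((n : ℝ) + 1) - 2 * γ) := by
  obtain ⟨N, rfl⟩ := Nat.exists_eq_add_of_le hn
  rw [sum_wgt_mul, sum_piw_mul_harmAffine (by omega), sum_piw_mul_harmAffine (by omega),
    sum_piw_mul_harmAffine (by omega)]
  simp only [harmAffine, Hdisc, show t1 + t2 + t3 + 2 + 1 = t1 + t2 + t3 + 3 from rfl]
  push_cast
  field_simp
  ring

lemma Hdisc_pos (t1 t2 t3 : ℕ) : 0 < Hdisc t1 t2 t3 := by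
  have hterm (t : ℕ) (ht : t + 1 < t1 + t2 + t3 + 3) :
      0 < ((t : ℝ) + 1) / ((t1 : ℝ) + t2 + t3 + 3) * (harm (t1 + t2 + t3 + 3) - harm (t + 1)) :=
    mul_pos (by positivity) (sub_pos.2 (harm_strictMono ht))
  unfold Hdisc
  linarith [hterm t1 (by omega), hterm t2 (by omega), hterm t3 (by omega)]

theorem comparison_principle {W : ℕ → ℕ → ℝ} (hW : ∀ n j, 0 ≤ W n j) {T L U : ℕ → ℝ} {n₀ : ℕ}
    (hL : ∀ n, n₀ < n → L n ≤ T n + ∑ j ∈ range (n - 1), W n j * L j)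
    (hU : ∀ n, n₀ < n → T n + ∑ j ∈ range (n - 1), W n j * U j ≤ U n)
    (hbase : ∀ n ≤ n₀, L n ≤ U n) (n : ℕ) : L n ≤ U n := by
  induction n using Nat.strong_induction_on with
  | _ n ih =>
    rcases le_or_gt n n₀ with hn | hn
    · exact hbase n hn
    calc L n ≤ T n + ∑ j ∈ range (n - 1), W n j * L j := hL n hn
      _ ≤ T n + ∑ j ∈ range (n - 1), W n j * U j := by
        gcongr with j hj
        · exact hW n j
        · exact ih j (by simp at hj; omega)
      _ ≤ U n := hU n hn

lemma exists_abs_sub_harmAffine_le (f : ℕ → ℝ) (α γ : ℝ) (n₀ : ℕ) :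
    ∃ β, ∀ j ≤ n₀, |f j - harmAffine α 0 γ j| ≤ β * ((j : ℝ) + 1) := by
  refine ⟨∑ i ∈ range (n₀ + 1), |f i - harmAffine α 0 γ i|, fun j hj => ?_⟩
  have hle := single_le_sum (f := fun i => |f i - harmAffine α 0 γ i|)
    (fun i _ => abs_nonneg _) (mem_range.2 (Nat.lt_succ_of_le hj))
  exact hle.trans (le_mul_of_one_le_right ((abs_nonneg _).trans hle) (by simp))

lemma harmAffine_eq_add (α β γ : ℝ) (n : ℕ) :
    harmAffine α β γ n = harmAffine α 0 γ n + β * ((n : ℝ) + 1) := by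
  simp only [harmAffine]; ring

section Recurrence

variable {t1 t2 t3 w : ℕ} {C T : ℕ → ℝ}

theorem exists_le_harmAffine (hw : t1 + t2 + t3 + 2 ≤ w)
    (hrec : ∀ n : ℕ, w < n → C n = T n + ∑ j ∈ range (n - 1), wgt t1 t2 t3 n j * C j)
    {α γ : ℝ} (hT : ∀ᶠ n : ℕ in atTop, T n ≤ α * Hdisc t1 t2 t3 * ((n : ℝ) + 1) - 2 * γ) :
    ∃ β, ∀ n, C n ≤ harmAffine α β γ n := by
  obtain ⟨n₀, hn₀⟩ := eventually_atTop.1 hT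
  obtain ⟨β, hβ⟩ := exists_abs_sub_harmAffine_le C α γ (max w n₀)
  refine ⟨β, comparison_principle (n₀ := max w n₀) (wgt_nonneg t1 t2 t3)
    (fun n hn => (hrec n (by omega)).le) (fun n hn => ?_) fun n hn => ?_⟩
  · rw [sum_wgt_mul_harmAffine t1 t2 t3 (by omega)]
    linarith [hn₀ n (by omega)]
  · rw [harmAffine_eq_add]
    linarith [(abs_le.1 (hβ n hn)).2]

theorem exists_harmAffine_le (hw : t1 + t2 + t3 + 2 ≤ w)
    (hrec : ∀ n : ℕ, w < n → C n = T n + ∑ j ∈ range (n - 1), wgt t1 t2 t3 n j * C j)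
    {α γ : ℝ} (hT : ∀ᶠ n : ℕ in atTop, α * Hdisc t1 t2 t3 * ((n : ℝ) + 1) - 2 * γ ≤ T n) :
    ∃ β, ∀ n, harmAffine α β γ n ≤ C n := by
  obtain ⟨n₀, hn₀⟩ := eventually_atTop.1 hT
  obtain ⟨β, hβ⟩ := exists_abs_sub_harmAffine_le C α γ (max w n₀)
  refine ⟨-β, comparison_principle (n₀ := max w n₀) (wgt_nonneg t1 t2 t3) (fun n hn => ?_)
    (fun n hn => (hrec n (by omega)).ge) fun n hn => ?_⟩
  · rw [sum_wgt_mul_harmAffine t1 t2 t3 (by omega)]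
    linarith [hn₀ n (by omega)]
  · rw [harmAffine_eq_add]
    linarith [(abs_le.1 (hβ n hn)).1]

end Recurrence

lemma tendsto_harm_div_log : Tendsto (fun n : ℕ => harm (n + 1) / log n) atTop (𝓝 1) := by
  have hlog : Tendsto (fun n : ℕ => log n) atTop atTop :=
    tendsto_log_atTop.comp tendsto_natCast_atTop_atTop
  have hsub : Tendsto (fun n : ℕ => harm (n + 1) - log n) atTop (𝓝 eulerMascheroniConstant) := by
    simpa [harm_succ, harm_eq_harmonic, add_sub_right_comm] using
      tendsto_harmonic_sub_log.add tendsto_one_div_add_atTop_nhds_zero_nat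
  have := (hsub.div_atTop hlog).const_add 1
  rw [add_zero] at this
  refine this.congr' ?_
  filter_upwards [hlog.eventually_gt_atTop 0] with n hn
  field_simp
  ring

lemma tendsto_harmAffine_div (α β γ : ℝ) :
    Tendsto (fun n : ℕ => harmAffine α β γ n / (n * log n)) atTop (𝓝 α) := by
  have hlog : Tendsto (fun n : ℕ => log n) atTop atTop :=
    tendsto_log_atTop.comp tendsto_natCast_atTop_atTop
  have hnlog : Tendsto (fun n : ℕ => (n : ℝ) * log n) atTop atTop :=
    tendsto_natCast_atTop_atTop.atTop_mul_atTop₀ hlog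
  have hlim := ((tendsto_one_div_atTop_nhds_zero_nat.const_add 1).mul
    ((tendsto_harm_div_log.const_mul α).add (hlog.inv_tendsto_atTop.const_mul β))).add
    (hnlog.inv_tendsto_atTop.const_mul γ)
  simp only [add_zero, mul_zero, mul_one, one_mul, Pi.inv_apply] at hlim
  refine hlim.congr' ?_
  filter_upwards [hlog.eventually_gt_atTop 0, eventually_gt_atTop 0] with n hlogn hn
  have : (n : ℝ) ≠ 0 := by positivity
  simp only [harmAffine]
  field_simp

lemma tendsto_div_of_harmAffine_bounds {C : ℕ → ℝ} {L : ℝ}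
    (hup : ∀ δ > 0, ∃ β γ, ∀ n, C n ≤ harmAffine (L + δ) β γ n)
    (hlo : ∀ δ > 0, ∃ β γ, ∀ n, harmAffine (L - δ) β γ n ≤ C n) :
    Tendsto (fun n : ℕ => C n / (n * log n)) atTop (𝓝 L) := by
  have hpos : ∀ᶠ n : ℕ in atTop, 0 < (n : ℝ) * log n :=
    (eventually_ge_atTop 2).mono fun n hn =>
      mul_pos (by positivity) (log_pos (by exact_mod_cast hn))
  refine tendsto_order.2 ⟨fun b hb => ?_, fun b hb => ?_⟩
  · obtain ⟨β, γ, h⟩ := hlo ((L - b) / 2) (by linarith)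
    have hb' : b < L - (L - b) / 2 := by linarith
    filter_upwards [(tendsto_harmAffine_div _ β γ).eventually (lt_mem_nhds hb'), hpos]
      with n hbn hn
    exact hbn.trans_le (div_le_div_of_nonneg_right (h n) hn.le)
  · obtain ⟨β, γ, h⟩ := hup ((b - L) / 2) (by linarith)
    have hb' : L + (b - L) / 2 < b := by linarith
    filter_upwards [(tendsto_harmAffine_div _ β γ).eventually (gt_mem_nhds hb'), hpos]
      with n hbn hn
    exact (div_le_div_of_nonneg_right (h n) hn.le).trans_lt hbn

theorem stmt0_general (t1 t2 t3 w : ℕ) (hw : t1 + t2 + t3 + 2 ≤ w)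
    (C T : ℕ → ℝ) (a : ℝ)
    (hT : (fun n : ℕ => T n - a * n) =O[atTop] (fun _ : ℕ => (1 : ℝ)))
    (hrec : ∀ n : ℕ, w < n →
      C n = T n + ∑ j ∈ Finset.range (n - 1), wgt t1 t2 t3 n j * C j) :
    Tendsto (fun n : ℕ => C n / ((n : ℝ) * Real.log n)) atTop
      (nhds (a / Hdisc t1 t2 t3)) := by
  have hH := Hdisc_pos t1 t2 t3
  obtain ⟨K, hK⟩ : ∃ K, ∀ᶠ n : ℕ in atTop, |T n - a * ((n : ℝ) + 1)| ≤ K := by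
    obtain ⟨K, hK⟩ := (hT.sub (isBigO_const_const a one_ne_zero atTop)).bound
    exact ⟨K, hK.mono fun n hn => by simpa [mul_add, sub_sub] using hn⟩
  refine tendsto_div_of_harmAffine_bounds (fun δ hδ => ?_) (fun δ hδ => ?_)
  · obtain ⟨β, hβ⟩ := exists_le_harmAffine (α := a / Hdisc t1 t2 t3 + δ) (γ := -K / 2) hw hrec
      (hK.mono fun n hn => by
        rw [add_mul, div_mul_cancel₀ _ hH.ne']
        nlinarith [abs_le.1 hn, mul_pos hδ hH, (n.cast_nonneg : (0 : ℝ) ≤ n)])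
    exact ⟨β, -K / 2, hβ⟩
  · obtain ⟨β, hβ⟩ := exists_harmAffine_le (α := a / Hdisc t1 t2 t3 - δ) (γ := K / 2) hw hrec
      (hK.mono fun n hn => by
        rw [sub_mul, div_mul_cancel₀ _ hH.ne']
        nlinarith [abs_le.1 hn, mul_pos hδ hH, (n.cast_nonneg : (0 : ℝ) ≤ n)])
    exact ⟨β, K / 2, hβ⟩

/-- If `C_n = T_n + ∑_{j=0}^{n−2} w_{n,j} C_j` for `n > w ≥ k` and `T_n = a n + O(1)` with
`a > 0`, then `C_n / (n ln n) → a / H(t)`. -/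
theorem stmt0 (t1 t2 t3 w : ℕ) (hw : t1 + t2 + t3 + 2 ≤ w)
    (C T : ℕ → ℝ) (a : ℝ) (ha : 0 < a)
    (hT : (fun n : ℕ => T n - a * n) =O[atTop] (fun _ : ℕ => (1 : ℝ)))
    (hrec : ∀ n : ℕ, w < n →
      C n = T n + ∑ j ∈ Finset.range (n - 1), wgt t1 t2 t3 n j * C j) :
    Tendsto (fun n : ℕ => C n / ((n : ℝ) * Real.log n)) atTop
      (nhds (a / Hdisc t1 t2 t3)) :=
  stmt0_general t1 t2 t3 w hw C T a hT hrec
end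

section
/- Let t = (t₁,t₂,t₃) ∈ ℕ³, k = t₁+t₂+t₃+2, n ≥ k+1 and N = n−k. The compound Dirichlet–multinomial expectation of I₁·I₃ satisfies E[I₁·I₃]/N = ((t₁+1)(t₃+1)/((k+1)(k+2)))·(N−1); equivalently, the expected value of a hypergeometric variable Hyp(I₃, I₁, N) (drawing I₃ times without replacement from N balls of which I₁ are red), averaged over the compound distribution of I, equals ((t₁+1)(t₃+1)/((k+1)(k+2)))·(n−k−1). -/
open Finset MeasureTheory

/-- The triangle `T = {(d₁,d₂) : d₁ ≥ 0, d₂ ≥ 0, d₁+d₂ ≤ 1} ⊂ ℝ²`. -/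
def simplex2 : Set (ℝ × ℝ) := {p | 0 ≤ p.1 ∧ 0 ≤ p.2 ∧ p.1 + p.2 ≤ 1}

/-- The `Dirichlet(t₁+1, t₂+1, t₃+1)` density
`d₁^{t₁} d₂^{t₂} (1−d₁−d₂)^{t₃} / B` with `B = t₁!t₂!t₃!/k!`, `k = t₁+t₂+t₃+2`. -/
noncomputable def dirDens (t1 t2 t3 : ℕ) (p : ℝ × ℝ) : ℝ :=
  p.1 ^ t1 * p.2 ^ t2 * (1 - p.1 - p.2) ^ t3 /
    ((t1.factorial * t2.factorial * t3.factorial : ℝ) / ((t1 + t2 + t3 + 2).factorial : ℝ))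

/-- The `Multinomial(N, (d₁, d₂, 1−d₁−d₂))` expectation of `g(I₁,I₂,I₃)`:
`∑_{i₁+i₂+i₃=N} (N!/(i₁!i₂!i₃!)) d₁^{i₁} d₂^{i₂} (1−d₁−d₂)^{i₃} g(i₁,i₂,i₃)`. -/
noncomputable def multinomExp (N : ℕ) (p : ℝ × ℝ) (g : ℕ → ℕ → ℕ → ℝ) : ℝ :=
  ∑ i1 ∈ Finset.range (N + 1), ∑ i2 ∈ Finset.range (N + 1 - i1),
    (N.factorial : ℝ) / ((i1.factorial : ℝ) * (i2.factorial : ℝ) * ((N - i1 - i2).factorial : ℝ))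
      * p.1 ^ i1 * p.2 ^ i2 * (1 - p.1 - p.2) ^ (N - i1 - i2) * g i1 i2 (N - i1 - i2)

/-- The compound Dirichlet–multinomial expectation `E[g(I)]`. -/
noncomputable def compoundExp (t1 t2 t3 N : ℕ) (g : ℕ → ℕ → ℕ → ℝ) : ℝ :=
  ∫ p in simplex2, dirDens t1 t2 t3 p * multinomExp N p g

/-! ### Auxiliary lemmas -/

lemma fact_prod_nat (a b : ℕ) :
    a.factorial * ∏ j ∈ Finset.range (b+1), (a+1+j) = (a+b+1).factorial := by
  induction b with
  | zero => rw [Finset.prod_range_one, Nat.factorial_succ]; ring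
  | succ b ih =>
    have h : a + (b+1) + 1 = (a+b+1)+1 := by omega
    rw [Finset.prod_range_succ, ← mul_assoc, ih, h, Nat.factorial_succ (a+b+1)]
    ring

lemma fact_prod (a b : ℕ) :
    (a.factorial : ℂ) * ∏ j ∈ Finset.range (b+1), ((a:ℂ)+1+j) = ((a+b+1).factorial : ℂ) := by
  exact_mod_cast congrArg (Nat.cast : ℕ → ℂ) (fact_prod_nat a b)

lemma beta_nat (a b : ℕ) : ∫ x in (0:ℝ)..1, x^a * (1-x)^b
    = (a.factorial * b.factorial : ℝ) / ((a+b+1).factorial : ℝ) := by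
  have h1 : Complex.betaIntegral ((a:ℂ)+1) ((b:ℂ)+1)
      = (b.factorial : ℂ) / ∏ j ∈ Finset.range (b+1), ((a:ℂ)+1+j) := by
    have := Complex.betaIntegral_eval_nat_add_one_right (u := (a:ℂ)+1) (by simp; positivity) b
    simpa using this
  have h2 : Complex.betaIntegral ((a:ℂ)+1) ((b:ℂ)+1)
      = ((∫ x in (0:ℝ)..1, x^a * (1-x)^b : ℝ) : ℂ) := by
    rw [Complex.betaIntegral, ← intervalIntegral.integral_ofReal]
    apply intervalIntegral.integral_congr
    intro x _
    have e1 : ((a:ℂ)+1-1) = ((a:ℕ):ℂ) := by ring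
    have e2 : ((b:ℂ)+1-1) = ((b:ℕ):ℂ) := by ring
    simp only [e1, e2, Complex.cpow_natCast]
    push_cast
    ring
  have h3 := fact_prod a b
  have h4 : (((a+b+1).factorial : ℕ) : ℂ) ≠ 0 := Nat.cast_ne_zero.2 (a+b+1).factorial_ne_zero
  have hprodne : (∏ j ∈ Finset.range (b+1), ((a:ℂ)+1+j)) ≠ 0 := by
    intro h0
    rw [h0, mul_zero] at h3
    exact h4 h3.symm
  have key : ((∫ x in (0:ℝ)..1, x^a * (1-x)^b : ℝ) : ℂ)
      = ((a.factorial * b.factorial : ℕ) : ℂ) / (((a+b+1).factorial : ℕ) : ℂ) := by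
    rw [← h2, h1, div_eq_div_iff hprodne h4]
    push_cast
    linear_combination (-(b.factorial : ℂ)) * h3
  have key' : ((∫ x in (0:ℝ)..1, x^a * (1-x)^b : ℝ) : ℂ)
      = (((a.factorial * b.factorial : ℝ) / ((a+b+1).factorial : ℝ) : ℝ) : ℂ) := by
    rw [key]; push_cast; ring
  exact Complex.ofReal_inj.mp key'

lemma beta_scaled (b c : ℕ) (L : ℝ) :
    ∫ y in (0:ℝ)..L, y^b * (L-y)^c
      = L^(b+c+1) * ((b.factorial * c.factorial : ℝ) / ((b+c+1).factorial : ℝ)) := by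
  have h := intervalIntegral.smul_integral_comp_mul_left (a := (0:ℝ)) (b := 1)
      (f := fun y => y^b * (L-y)^c) L
  rw [mul_zero, mul_one] at h
  rw [← h]
  have : ∀ u : ℝ, (L*u)^b * (L - L*u)^c = L^(b+c) * (u^b * (1-u)^c) := by
    intro u; rw [show L - L*u = L*(1-u) by ring, mul_pow, mul_pow]; ring
  simp only [this]
  rw [intervalIntegral.integral_const_mul, beta_nat b c]
  simp only [smul_eq_mul]
  ring

lemma simplex2_isCompact : IsCompact simplex2 := by
  have hclosed : IsClosed simplex2 := by
    have : simplex2 = {p : ℝ × ℝ | 0 ≤ p.1} ∩ {p | 0 ≤ p.2} ∩ {p | p.1 + p.2 ≤ 1} := by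
      ext p; simp [simplex2]; tauto
    rw [this]
    exact ((isClosed_le continuous_const continuous_fst).inter
      (isClosed_le continuous_const continuous_snd)).inter
      (isClosed_le (continuous_fst.add continuous_snd) continuous_const)
  refine IsCompact.of_isClosed_subset (isCompact_Icc (a := ((0:ℝ),(0:ℝ))) (b := (1,1))) hclosed ?_
  rintro ⟨x, y⟩ ⟨h1, h2, h3⟩
  simp only [Set.mem_Icc, Prod.le_def]
  simp only [Set.mem_setOf_eq] at h1 h2 h3
  exact ⟨⟨h1, h2⟩, by linarith, by linarith⟩

lemma simplex2_meas : MeasurableSet simplex2 :=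
  simplex2_isCompact.isClosed.measurableSet

lemma dirichlet_integral (a b c : ℕ) :
    ∫ p in simplex2, p.1^a * p.2^b * (1-p.1-p.2)^c
      = (a.factorial * b.factorial * c.factorial : ℝ) / ((a+b+c+2).factorial : ℝ) := by
  set F : ℝ × ℝ → ℝ := fun p => p.1^a * p.2^b * (1-p.1-p.2)^c with hF
  have hFc : Continuous F := by
    apply Continuous.mul
    apply Continuous.mul
    · exact continuous_fst.pow a
    · exact continuous_snd.pow b
    · exact ((continuous_const.sub continuous_fst).sub continuous_snd).pow c
  have hint : IntegrableOn F simplex2 volume :=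
    hFc.continuousOn.integrableOn_compact simplex2_isCompact
  have hind : Integrable (simplex2.indicator F) volume :=
    (integrable_indicator_iff simplex2_meas).2 hint
  rw [← MeasureTheory.integral_indicator simplex2_meas]
  rw [Measure.volume_eq_prod] at hind ⊢
  rw [MeasureTheory.integral_prod _ hind]
  have inner_eq : ∀ x : ℝ, (∫ y, simplex2.indicator F (x, y))
      = (Set.Icc (0:ℝ) 1).indicator
          (fun x => x^a * ((1-x)^(b+c+1) * ((b.factorial * c.factorial : ℝ) / ((b+c+1).factorial : ℝ)))) x := by
    intro x
    have hzero : ¬ (0 ≤ x ∧ x ≤ 1) → (∀ y : ℝ, simplex2.indicator F (x, y) = 0) ∧ x ∉ Set.Icc (0:ℝ) 1 := by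
      intro hx
      constructor
      · intro y
        apply Set.indicator_of_notMem
        rintro ⟨h1, h2, h3⟩
        simp only [Set.mem_setOf_eq] at h1 h2 h3
        exact hx ⟨h1, by linarith⟩
      · simpa [Set.mem_Icc] using hx
    by_cases hx : 0 ≤ x ∧ x ≤ 1
    · obtain ⟨hx0, hx1⟩ := hx
      have hmem : ∀ y : ℝ, ((x,y) ∈ simplex2) ↔ y ∈ Set.Icc 0 (1-x) := by
        intro y; simp only [simplex2, Set.mem_setOf_eq, Set.mem_Icc]
        constructor
        · rintro ⟨_, h2, h3⟩; exact ⟨h2, by linarith⟩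
        · rintro ⟨h2, h3⟩; exact ⟨hx0, h2, by linarith⟩
      have : (fun y => simplex2.indicator F (x, y))
          = (Set.Icc (0:ℝ) (1-x)).indicator (fun y => F (x, y)) := by
        funext y
        by_cases hy : (x,y) ∈ simplex2
        · rw [Set.indicator_of_mem hy, Set.indicator_of_mem ((hmem y).1 hy)]
        · rw [Set.indicator_of_notMem hy,
            Set.indicator_of_notMem (fun h => hy ((hmem y).2 h))]
      rw [this, MeasureTheory.integral_indicator measurableSet_Icc]
      rw [Set.indicator_of_mem (Set.mem_Icc.2 ⟨hx0, hx1⟩)]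
      have h1x : (0:ℝ) ≤ 1 - x := by linarith
      rw [MeasureTheory.integral_Icc_eq_integral_Ioc,
        ← intervalIntegral.integral_of_le h1x]
      have : ∀ y : ℝ, F (x, y) = x^a * (y^b * ((1-x) - y)^c) := by
        intro y; simp only [hF]; ring_nf
      simp only [this]
      rw [intervalIntegral.integral_const_mul, beta_scaled b c (1-x)]
    · obtain ⟨h0, hnot⟩ := hzero hx
      simp only [h0, MeasureTheory.integral_zero]
      rw [Set.indicator_of_notMem hnot]
  simp only [inner_eq]
  rw [MeasureTheory.integral_indicator measurableSet_Icc,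
    MeasureTheory.integral_Icc_eq_integral_Ioc,
    ← intervalIntegral.integral_of_le (by norm_num : (0:ℝ) ≤ 1)]
  have : ∀ x : ℝ, x^a * ((1-x)^(b+c+1) * ((b.factorial * c.factorial : ℝ) / ((b+c+1).factorial : ℝ)))
      = ((b.factorial * c.factorial : ℝ) / ((b+c+1).factorial : ℝ)) * (x^a * (1-x)^(b+c+1)) := by
    intro x; ring
  simp only [this]
  rw [intervalIntegral.integral_const_mul, beta_nat a (b+c+1)]
  have e : a + (b+c+1) + 1 = a+b+c+2 := by omega
  rw [e]
  have h1 : ((b+c+1).factorial : ℝ) ≠ 0 := Nat.cast_ne_zero.2 (b+c+1).factorial_ne_zero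
  have h2 : ((a+b+c+2).factorial : ℝ) ≠ 0 := Nat.cast_ne_zero.2 (a+b+c+2).factorial_ne_zero
  field_simp

lemma trinom (M : ℕ) (x y z : ℝ) :
    ∑ i1 ∈ Finset.range (M+1), ∑ i2 ∈ Finset.range (M+1-i1),
      (M.factorial : ℝ) / ((i1.factorial : ℝ) * (i2.factorial : ℝ) * ((M - i1 - i2).factorial : ℝ))
        * x^i1 * y^i2 * z^(M-i1-i2)
    = (x+y+z)^M := by
  have expand : (x+y+z)^M = ∑ i1 ∈ Finset.range (M+1),
      x^i1 * (y+z)^(M-i1) * (M.choose i1 : ℝ) := by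
    rw [show x+y+z = x+(y+z) by ring, add_pow]
  rw [expand]
  apply Finset.sum_congr rfl
  intro i1 hi1
  have hi1' : i1 ≤ M := by simpa using Nat.lt_succ_iff.mp (Finset.mem_range.mp hi1)
  have expand2 : (y+z)^(M-i1) = ∑ i2 ∈ Finset.range (M-i1+1),
      y^i2 * z^(M-i1-i2) * ((M-i1).choose i2 : ℝ) := by
    rw [add_pow]
  have hr : M + 1 - i1 = M - i1 + 1 := by omega
  rw [expand2, hr, Finset.mul_sum, Finset.sum_mul]
  apply Finset.sum_congr rfl
  intro i2 hi2
  have hi2' : i2 ≤ M - i1 := Nat.lt_succ_iff.mp (Finset.mem_range.mp hi2)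
  have c1 : (M.choose i1 : ℝ) = (M.factorial : ℝ) / ((i1.factorial : ℝ) * ((M-i1).factorial : ℝ)) :=
    Nat.cast_choose ℝ hi1'
  have c2 : ((M-i1).choose i2 : ℝ)
      = ((M-i1).factorial : ℝ) / ((i2.factorial : ℝ) * ((M-i1-i2).factorial : ℝ)) :=
    Nat.cast_choose ℝ hi2'
  rw [c1, c2]
  have f1 : (i1.factorial : ℝ) ≠ 0 := Nat.cast_ne_zero.2 i1.factorial_ne_zero
  have f2 : (i2.factorial : ℝ) ≠ 0 := Nat.cast_ne_zero.2 i2.factorial_ne_zero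
  have f3 : ((M-i1).factorial : ℝ) ≠ 0 := Nat.cast_ne_zero.2 (M-i1).factorial_ne_zero
  have f4 : ((M-i1-i2).factorial : ℝ) ≠ 0 := Nat.cast_ne_zero.2 (M-i1-i2).factorial_ne_zero
  field_simp

lemma shift2 (n : ℕ) (f : ℕ → ℝ) (h0 : f 0 = 0) (hl : f (n+1) = 0) :
    ∑ i ∈ Finset.range (n+2), f i = ∑ i ∈ Finset.range n, f (i+1) := by
  rw [Finset.sum_range_succ, hl, add_zero, Finset.sum_range_succ', h0, add_zero]

lemma multinom_eval_aux (M : ℕ) (x y z : ℝ) :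
    ∑ i1 ∈ Finset.range (M+2+1), ∑ i2 ∈ Finset.range (M+2+1-i1),
      ((M+2).factorial : ℝ) / ((i1.factorial : ℝ) * (i2.factorial : ℝ) * (((M+2) - i1 - i2).factorial : ℝ))
        * x^i1 * y^i2 * z^((M+2)-i1-i2) * ((i1 : ℝ) * (((M+2)-i1-i2 : ℕ) : ℝ))
    = ((M:ℝ)+2)*((M:ℝ)+1)*x*z*(x+y+z)^M := by
  have hMfact : ((M+2).factorial : ℝ) = ((M:ℝ)+2)*((M:ℝ)+1)*(M.factorial : ℝ) := by
    rw [show M+2 = (M+1)+1 from rfl, Nat.factorial_succ, Nat.factorial_succ]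
    push_cast; ring
  rw [show M+2+1 = (M+1)+2 from rfl]
  rw [shift2 (M+1)]
  · rw [← trinom M x y z, Finset.mul_sum]
    apply Finset.sum_congr rfl
    intro j hj
    have hjM : j ≤ M := Nat.lt_succ_iff.mp (Finset.mem_range.mp hj)
    have hr : M+2+1-(j+1) = (M+1-j)+1 := by omega
    rw [hr, Finset.sum_range_succ, Finset.mul_sum]
    have hlast : ((M+2).factorial : ℝ)
        / (((j+1).factorial : ℝ) * (((M+1-j).factorial : ℝ)) * (((M+2) - (j+1) - (M+1-j)).factorial : ℝ))
        * x^(j+1) * y^(M+1-j) * z^((M+2)-(j+1)-(M+1-j)) * ((((j+1) : ℕ) : ℝ) * (((M+2)-(j+1)-(M+1-j) : ℕ) : ℝ)) = 0 := by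
      have e : (M+2)-(j+1)-(M+1-j) = 0 := by omega
      rw [e]; simp
    rw [hlast, add_zero]
    apply Finset.sum_congr rfl
    intro i2 hi2
    have hi2' : i2 ≤ M - j := by
      have := Finset.mem_range.mp hi2; omega
    have e : (M+2)-(j+1)-i2 = (M-j-i2)+1 := by omega
    rw [e]
    generalize (M - j - i2) = w
    have cfj : (((j+1).factorial) : ℝ) = ((j:ℝ)+1) * (j.factorial : ℝ) := by
      rw [Nat.factorial_succ]; push_cast; ring
    have cfw : (((w+1).factorial) : ℝ) = ((w:ℝ)+1) * (w.factorial : ℝ) := by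
      rw [Nat.factorial_succ]; push_cast; ring
    have cj : (((j+1) : ℕ) : ℝ) = (j:ℝ)+1 := by push_cast; ring
    have cw : (((w+1) : ℕ) : ℝ) = (w:ℝ)+1 := by push_cast; ring
    rw [hMfact, cfj, cfw, cj, cw]
    have f1 : (j.factorial : ℝ) ≠ 0 := Nat.cast_ne_zero.2 j.factorial_ne_zero
    have f2 : (i2.factorial : ℝ) ≠ 0 := Nat.cast_ne_zero.2 i2.factorial_ne_zero
    have f3 : (w.factorial : ℝ) ≠ 0 := Nat.cast_ne_zero.2 w.factorial_ne_zero
    have g1 : ((j:ℝ)+1) ≠ 0 := by positivity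
    have g3 : ((w:ℝ)+1) ≠ 0 := by positivity
    field_simp
    ring
  · apply Finset.sum_eq_zero
    intro i2 _
    simp
  · apply Finset.sum_eq_zero
    intro i2 hi2
    have hi2' : i2 < M+2+1-(M+1+1) := Finset.mem_range.mp hi2
    have e : (M+2)-(M+1+1)-i2 = 0 := by omega
    rw [e]; simp

lemma multinom_eval (N : ℕ) (x y : ℝ) :
    multinomExp N (x,y) (fun i1 _ i3 => (i1 : ℝ) * (i3 : ℝ))
      = (N:ℝ)*((N:ℝ)-1)*x*(1-x-y) := by
  match N with
  | 0 => norm_num [multinomExp]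
  | 1 => norm_num [multinomExp, Finset.sum_range_succ]
  | (M+2) =>
    have h := multinom_eval_aux M x y (1-x-y)
    have e : x+y+(1-x-y) = 1 := by ring
    rw [e, one_pow, mul_one] at h
    calc multinomExp (M+2) (x,y) (fun i1 _ i3 => (i1 : ℝ) * (i3 : ℝ))
        = ((M:ℝ)+2)*((M:ℝ)+1)*x*(1-x-y) := h
      _ = ((M+2 : ℕ):ℝ)*(((M+2 : ℕ):ℝ)-1)*x*(1-x-y) := by push_cast; ring

lemma compound_eval (t1 t2 t3 N : ℕ) :
    compoundExp t1 t2 t3 N (fun i1 _ i3 => (i1 : ℝ) * (i3 : ℝ))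
      = (N:ℝ)*((N:ℝ)-1) * (((t1:ℝ)+1) * ((t3:ℝ)+1)
          / (((t1:ℝ)+t2+t3+3) * ((t1:ℝ)+t2+t3+4))) := by
  have hB : ((t1.factorial * t2.factorial * t3.factorial : ℝ) / ((t1+t2+t3+2).factorial : ℝ)) ≠ 0 := by
    have h1 : (t1.factorial : ℝ) ≠ 0 := Nat.cast_ne_zero.2 t1.factorial_ne_zero
    have h2 : (t2.factorial : ℝ) ≠ 0 := Nat.cast_ne_zero.2 t2.factorial_ne_zero
    have h3 : (t3.factorial : ℝ) ≠ 0 := Nat.cast_ne_zero.2 t3.factorial_ne_zero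
    have h4 : ((t1+t2+t3+2).factorial : ℝ) ≠ 0 := Nat.cast_ne_zero.2 (t1+t2+t3+2).factorial_ne_zero
    positivity
  have integrand_eq : ∀ p : ℝ × ℝ,
      dirDens t1 t2 t3 p * multinomExp N p (fun i1 _ i3 => (i1 : ℝ) * (i3 : ℝ))
      = ((N:ℝ)*((N:ℝ)-1) / ((t1.factorial * t2.factorial * t3.factorial : ℝ) / ((t1+t2+t3+2).factorial : ℝ)))
          * (p.1^(t1+1) * p.2^t2 * (1-p.1-p.2)^(t3+1)) := by
    rintro ⟨x, y⟩
    have hm : multinomExp N (x,y) (fun i1 _ i3 => (i1 : ℝ) * (i3 : ℝ))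
        = (N:ℝ)*((N:ℝ)-1)*x*(1-x-y) := multinom_eval N x y
    show dirDens t1 t2 t3 (x,y) * multinomExp N (x,y) (fun i1 _ i3 => (i1 : ℝ) * (i3 : ℝ)) = _
    rw [hm, dirDens]
    show x ^ t1 * y ^ t2 * (1 - x - y) ^ t3 / _ * _ = _ * (x^(t1+1) * y^t2 * (1-x-y)^(t3+1))
    rw [pow_succ, pow_succ]
    field_simp
  rw [compoundExp]
  rw [MeasureTheory.setIntegral_congr_fun simplex2_meas (fun p _ => integrand_eq p)]
  rw [MeasureTheory.integral_const_mul, dirichlet_integral (t1+1) t2 (t3+1)]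
  have e : (t1+1)+t2+(t3+1)+2 = (t1+t2+t3+2)+2 := by omega
  rw [e]
  have hf1 : ((t1+1).factorial : ℝ) = ((t1:ℝ)+1) * (t1.factorial : ℝ) := by
    rw [Nat.factorial_succ]; push_cast; ring
  have hf3 : ((t3+1).factorial : ℝ) = ((t3:ℝ)+1) * (t3.factorial : ℝ) := by
    rw [Nat.factorial_succ]; push_cast; ring
  have hf4 : (((t1+t2+t3+2)+2).factorial : ℝ)
      = ((t1:ℝ)+t2+t3+4) * (((t1:ℝ)+t2+t3+3) * ((t1+t2+t3+2).factorial : ℝ)) := by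
    rw [show (t1+t2+t3+2)+2 = ((t1+t2+t3+2)+1)+1 from rfl, Nat.factorial_succ, Nat.factorial_succ]
    push_cast; ring
  rw [hf1, hf3, hf4]
  have h1 : (t1.factorial : ℝ) ≠ 0 := Nat.cast_ne_zero.2 t1.factorial_ne_zero
  have h2 : (t2.factorial : ℝ) ≠ 0 := Nat.cast_ne_zero.2 t2.factorial_ne_zero
  have h3 : (t3.factorial : ℝ) ≠ 0 := Nat.cast_ne_zero.2 t3.factorial_ne_zero
  have h4 : ((t1+t2+t3+2).factorial : ℝ) ≠ 0 := Nat.cast_ne_zero.2 (t1+t2+t3+2).factorial_ne_zero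
  have h5 : ((t1:ℝ)+t2+t3+3) ≠ 0 := by positivity
  have h6 : ((t1:ℝ)+t2+t3+4) ≠ 0 := by positivity
  field_simp

/-- `E[I₁·I₃]/N = ((t₁+1)(t₃+1)/((k+1)(k+2)))·(N−1)`, i.e. the averaged expectation of a
hypergeometric variable `Hyp(I₃, I₁, N)` equals `((t₁+1)(t₃+1)/((k+1)(k+2)))·(n−k−1)`. -/
theorem stmt4 (t1 t2 t3 n : ℕ) (hn : t1 + t2 + t3 + 3 ≤ n) :
    compoundExp t1 t2 t3 (n - (t1 + t2 + t3 + 2)) (fun i1 _ i3 => (i1 : ℝ) * (i3 : ℝ))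
        / ((n - (t1 + t2 + t3 + 2) : ℕ) : ℝ)
    = ((t1 : ℝ) + 1) * ((t3 : ℝ) + 1)
        / (((t1 : ℝ) + t2 + t3 + 3) * ((t1 : ℝ) + t2 + t3 + 4))
        * (((n - (t1 + t2 + t3 + 2) : ℕ) : ℝ) - 1) := by
  set N := n - (t1 + t2 + t3 + 2) with hN
  have hN1 : 1 ≤ N := by omega
  have hNne : ((N : ℕ) : ℝ) ≠ 0 := Nat.cast_ne_zero.2 (by omega)
  rw [compound_eval]
  field_simp
end

section
/- Let t = (t₁,t₂,t₃) ∈ ℕ³ and k = t₁+t₂+t₃+2. Then ∫₀¹ z·w(z) dz = 1, where w(z) = Σ_{l=1}^{3} (k−t_l)·binom(k,t_l)·z^{t_l}·(1−z)^{k−t_l−1}. -/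
/-!
Since `(k - t) * C(k, t) = (t + 1) * C(k, t + 1)`, the `l`-th summand of `z * w(z)` is `t_l + 1`
times the Bernstein basis polynomial `C(k, t_l + 1) z^(t_l + 1) (1 - z)^(k - t_l - 1)`. By the
Beta integral every Bernstein basis polynomial of degree `k` has integral `1 / (k + 1)` over
`[0, 1]`, so the integral is `(t₁ + t₂ + t₃ + 3) / (k + 1) = 1`.
-/

open Finset intervalIntegral

/-- The shape function
`w(z) = ∑_{l=1}^3 (k−t_l) binom(k,t_l) z^{t_l} (1−z)^{k−t_l−1}`, `k = t₁+t₂+t₃+2`. -/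
noncomputable def shapeW (t1 t2 t3 : ℕ) (z : ℝ) : ℝ :=
  (((t1 + t2 + t3 + 2) - t1 : ℕ) : ℝ) * ((t1 + t2 + t3 + 2).choose t1 : ℝ)
      * z ^ t1 * (1 - z) ^ ((t1 + t2 + t3 + 2) - t1 - 1)
  + (((t1 + t2 + t3 + 2) - t2 : ℕ) : ℝ) * ((t1 + t2 + t3 + 2).choose t2 : ℝ)
      * z ^ t2 * (1 - z) ^ ((t1 + t2 + t3 + 2) - t2 - 1)
  + (((t1 + t2 + t3 + 2) - t3 : ℕ) : ℝ) * ((t1 + t2 + t3 + 2).choose t3 : ℝ)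
      * z ^ t3 * (1 - z) ^ ((t1 + t2 + t3 + 2) - t3 - 1)

open scoped Nat

theorem integral_pow_mul_one_sub_pow (a b : ℕ) :
    ∫ x in (0 : ℝ)..1, x ^ a * (1 - x) ^ b = (a ! * b ! : ℝ) / (a + b + 1)! := by
  have hbeta : ((∫ x in (0 : ℝ)..1, x ^ a * (1 - x) ^ b : ℝ) : ℂ)
      = Complex.betaIntegral (a + 1) (b + 1) := by
    rw [Complex.betaIntegral, ← integral_ofReal]
    exact integral_congr fun x _ => by simp
  have hgamma := Complex.Gamma_mul_Gamma_eq_betaIntegral (s := a + 1) (t := b + 1)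
    (by simpa using a.cast_add_one_pos) (by simpa using b.cast_add_one_pos)
  rw [show (a + 1 : ℂ) + (b + 1) = ((a + b + 1 : ℕ) : ℂ) + 1 by push_cast; ring,
    Complex.Gamma_nat_eq_factorial, Complex.Gamma_nat_eq_factorial,
    Complex.Gamma_nat_eq_factorial, ← hbeta] at hgamma
  rw [eq_div_iff (by positivity), mul_comm]
  exact_mod_cast hgamma.symm

theorem integral_choose_mul_pow_mul_one_sub_pow (ν m : ℕ) :
    ∫ x in (0 : ℝ)..1, ((ν + m).choose ν : ℝ) * x ^ ν * (1 - x) ^ m = 1 / (ν + m + 1) := by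
  have hfact := Nat.choose_mul_factorial_mul_factorial (Nat.le_add_right ν m)
  rw [Nat.add_sub_cancel_left] at hfact
  have hfact' : ((ν + m).choose ν : ℝ) * ν ! * m ! = (ν + m)! := by exact_mod_cast hfact
  simp_rw [mul_assoc]
  rw [integral_const_mul, integral_pow_mul_one_sub_pow, Nat.factorial_succ]
  push_cast
  field_simp
  linear_combination hfact'

theorem integral_mul_sub_mul_choose_mul_pow_mul_one_sub_pow {k t : ℕ} (htk : t < k) :
    ∫ z in (0 : ℝ)..1, z * (((k - t : ℕ) : ℝ) * (k.choose t : ℝ) * z ^ t * (1 - z) ^ (k - t - 1))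
      = (t + 1) / (k + 1) := by
  obtain ⟨m, rfl⟩ : ∃ m, k = t + 1 + m := ⟨k - (t + 1), by omega⟩
  have hsub : t + 1 + m - t = m + 1 := by omega
  have hchoose : ((m + 1 : ℕ) : ℝ) * ((t + 1 + m).choose t : ℝ)
      = (t + 1) * ((t + 1 + m).choose (t + 1) : ℝ) := by
    have h := Nat.choose_succ_right_eq (t + 1 + m) t
    rw [hsub] at h
    exact_mod_cast (by linarith :
      (m + 1) * (t + 1 + m).choose t = (t + 1) * (t + 1 + m).choose (t + 1))
  rw [hsub, Nat.add_sub_cancel]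
  calc ∫ z in (0 : ℝ)..1,
        z * (((m + 1 : ℕ) : ℝ) * ((t + 1 + m).choose t : ℝ) * z ^ t * (1 - z) ^ m)
      = ∫ z in (0 : ℝ)..1,
        (t + 1) * (((t + 1 + m).choose (t + 1) : ℝ) * z ^ (t + 1) * (1 - z) ^ m) :=
        integral_congr fun z _ => by linear_combination z ^ (t + 1) * (1 - z) ^ m * hchoose
    _ = (t + 1) / ((t + 1 + m : ℕ) + 1) := by
        rw [integral_const_mul, integral_choose_mul_pow_mul_one_sub_pow]
        push_cast
        ring

/-- `∫₀¹ z w(z) dz = 1` for the shape function of the dual-pivot Quicksort recurrence. -/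
theorem stmt13 (t1 t2 t3 : ℕ) :
    ∫ z in (0 : ℝ)..1, z * shapeW t1 t2 t3 z = 1 := by
  simp only [shapeW, mul_add]
  rw [integral_add, integral_add,
    integral_mul_sub_mul_choose_mul_pow_mul_one_sub_pow (by omega),
    integral_mul_sub_mul_choose_mul_pow_mul_one_sub_pow (by omega),
    integral_mul_sub_mul_choose_mul_pow_mul_one_sub_pow (by omega)]
  · field_simp
    push_cast
    ring
  all_goals exact Continuous.intervalIntegrable (by fun_prop) _ _
end
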